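/- arXiv:2008.06308 — 2 statements merged into one kernel-verified Lean document; each statement's English description precedes it below -/
import Mathlib

section
/- Let α ∈ (0,2], let c_n ≥ 0 for n ≥ 1, and let (Y_n)_{n≥1} be independent real random variables such that the characteristic function of Y_n is θ ↦ exp(−c_n |θ|^α) (i.e., Y_n is symmetric α-stable with scale parameter c_n^{1/α}). Then the series Σ_{n=1}^∞ Y_n converges almost surely if and only if Σ_{n=1}^∞ c_n < ∞. -/
/-!
If `∑ c n = ∞`, the partial sums `S N` have characteristic functions
`exp (-(∑ n < N, c n) * |θ| ^ α) → 0` at every `θ ≠ 0`. Were `S N → S` almost surely, dominated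
convergence would make these tend to the characteristic function of `S`, which is continuous and
equal to `1` at `0`.

If `∑ c n < ∞`, write `Y n = sin (Y n) + (Y n - sin (Y n))`. The variables `sin (Y n)` are
independent, bounded and centred (the characteristic function is real), with
`E[sin (Y n) ^ 2] = (1 - exp (-2 ^ α * c n)) / 2 ≤ 2 * c n`; their partial sums form an
`L²`-bounded martingale, which converges almost surely. For the remainder,
`E[1 - sinc (Y n)] = ½ ∫ t in -1..1, (1 - exp (-c n * |t| ^ α)) ≤ c n`, so `∑ (1 - sinc (Y n))`
is almost surely finite. Since `sinc y ≤ 1 / |y|`, this forces `|Y n| < 2` eventually, and then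
`|Y n - sin (Y n)| = |Y n| * (1 - sinc (Y n)) ≤ 2 * (1 - sinc (Y n))`.
-/

open MeasureTheory ProbabilityTheory Filter Topology

section CharFunReal

variable {μ : Measure ℝ}

lemma integrable_cexp_mul_I [IsFiniteMeasure μ] (t : ℝ) :
    Integrable (fun x : ℝ => Complex.exp (t * x * Complex.I)) μ :=
  (integrable_const (1 : ℝ)).mono' (by fun_prop) (ae_of_all _ fun x => by
    rw [← Complex.ofReal_mul, Complex.norm_exp_ofReal_mul_I])

lemma charFun_re [IsFiniteMeasure μ] (t : ℝ) :
    (charFun μ t).re = ∫ x, Real.cos (t * x) ∂μ := by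
  rw [charFun_apply_real, ← RCLike.re_to_complex, ← integral_re (integrable_cexp_mul_I t)]
  simp_rw [RCLike.re_to_complex, ← Complex.ofReal_mul, Complex.exp_ofReal_mul_I_re]

lemma charFun_im [IsFiniteMeasure μ] (t : ℝ) :
    (charFun μ t).im = ∫ x, Real.sin (t * x) ∂μ := by
  rw [charFun_apply_real, ← RCLike.im_to_complex, ← integral_im (integrable_cexp_mul_I t)]
  simp_rw [RCLike.im_to_complex, ← Complex.ofReal_mul, Complex.exp_ofReal_mul_I_im]

lemma integral_sin_sq_eq_charFun_re [IsProbabilityMeasure μ] :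
    ∫ x, Real.sin x ^ 2 ∂μ = (1 - (charFun μ 2).re) / 2 := by
  have hcos : Integrable (fun x : ℝ => Real.cos (2 * x)) μ :=
    (integrable_const 1).mono' (by fun_prop) (ae_of_all _ fun x => by
      simpa using Real.abs_cos_le_one (2 * x))
  have hsq (x : ℝ) : Real.sin x ^ 2 = (1 - Real.cos (2 * x)) / 2 := by
    rw [Real.sin_sq_eq_half_sub]; ring
  simp_rw [hsq, charFun_re]
  rw [integral_div, integral_sub (integrable_const _) hcos, integral_const, probReal_univ,
    one_smul]

lemma integral_one_sub_sinc_le_of_forall [IsProbabilityMeasure μ] {b : ℝ}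
    (h : ∀ t ∈ Set.Icc (-1 : ℝ) 1, 1 - (charFun μ t).re ≤ b) :
    ∫ x, (1 - Real.sinc x) ∂μ ≤ b := by
  have hre : Continuous fun t => (charFun μ t).re := Complex.continuous_re.comp continuous_charFun
  have hsinc : ∫ t in (-1 : ℝ)..1, (charFun μ t).re = 2 * ∫ x, Real.sinc x ∂μ := by
    have := congrArg Complex.re (integral_charFun_Icc (μ := μ) one_pos)
    rw [← Complex.reCLM_apply, ← ContinuousLinearMap.intervalIntegral_comp_comm _
      (continuous_charFun.intervalIntegrable _ _)] at this
    simpa using this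
  have hmono : ∫ t in (-1 : ℝ)..1, (1 - (charFun μ t).re) ≤ ∫ t in (-1 : ℝ)..1, b :=
    intervalIntegral.integral_mono_on (by norm_num)
      ((continuous_const.sub hre).intervalIntegrable _ _) intervalIntegrable_const h
  rw [intervalIntegral.integral_sub intervalIntegrable_const (hre.intervalIntegrable _ _), hsinc,
    intervalIntegral.integral_const, intervalIntegral.integral_const] at hmono
  rw [integral_sub (integrable_const 1) Real.integrable_sinc, integral_const, probReal_univ]
  norm_num at hmono ⊢
  linarith

end CharFunReal

lemma abs_sub_sin_le_of_one_sub_sinc_lt {y : ℝ} (h : 1 - Real.sinc y < 1 / 2) :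
    |y - Real.sin y| ≤ 2 * (1 - Real.sinc y) := by
  rcases eq_or_ne y 0 with rfl | hy
  · simp
  have hy2 : |y| < 2 := by
    by_contra! hy2
    have : Real.sinc y ≤ 1 / 2 :=
      (Real.sinc_le_inv_abs hy).trans (by rw [one_div]; exact inv_anti₀ two_pos hy2)
    linarith
  have hfactor : y - Real.sin y = y * (1 - Real.sinc y) := by
    rw [Real.sinc_of_ne_zero hy]; field_simp
  rw [hfactor, abs_mul, abs_of_nonneg (sub_nonneg.2 (Real.sinc_le_one y))]
  exact mul_le_mul_of_nonneg_right hy2.le (sub_nonneg.2 (Real.sinc_le_one y))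

lemma exists_tendsto_sum_of_sin {y : ℕ → ℝ}
    (hsin : ∃ L, Tendsto (fun N => ∑ n ∈ Finset.range N, Real.sin (y n)) atTop (𝓝 L))
    (hsinc : Summable fun n => 1 - Real.sinc (y n)) :
    ∃ L, Tendsto (fun N => ∑ n ∈ Finset.range N, y n) atTop (𝓝 L) := by
  obtain ⟨L, hL⟩ := hsin
  have hsmall : ∀ᶠ n in cofinite, 1 - Real.sinc (y n) < 1 / 2 :=
    hsinc.tendsto_cofinite_zero.eventually (gt_mem_nhds (by norm_num))
  have hdiff : Summable fun n => y n - Real.sin (y n) :=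
    Summable.of_norm_bounded_eventually (hsinc.mul_left 2)
      (hsmall.mono fun n hn => abs_sub_sin_le_of_one_sub_sinc_lt hn)
  refine ⟨L + ∑' n, (y n - Real.sin (y n)), ?_⟩
  convert hL.add hdiff.hasSum.tendsto_sum_nat using 1
  ext N
  rw [← Finset.sum_add_distrib]
  simp

section

variable {Ω : Type*} [MeasurableSpace Ω] {μ : Measure Ω}

lemma ae_summable_of_summable_integral {f : ℕ → Ω → ℝ} (hf : ∀ n, Integrable (f n) μ)
    (hf₀ : ∀ n, 0 ≤ f n) (hsum : Summable fun n => ∫ ω, f n ω ∂μ) :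
    ∀ᵐ ω ∂μ, Summable fun n => f n ω := by
  have hnorm (n : ℕ) : eLpNorm (f n) 1 μ = ENNReal.ofReal (∫ ω, f n ω ∂μ) := by
    rw [eLpNorm_one_eq_lintegral_enorm, ← ofReal_integral_norm_eq_lintegral_enorm (hf n)]
    simp_rw [Real.norm_of_nonneg (hf₀ n _)]
  have hfin : ∑' n, eLpNorm (f n) 1 μ ≠ ⊤ := by
    simp_rw [hnorm]
    rw [← ENNReal.ofReal_tsum_of_nonneg (fun n => integral_nonneg (hf₀ n)) hsum]
    exact ENNReal.ofReal_ne_top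
  filter_upwards [summable_norm_of_tsum_eLpNorm_ne_top le_rfl
    (fun n => (hf n).aestronglyMeasurable) hfin] with ω hω
  exact hω.of_norm

lemma eLpNorm_two_le_sqrt_of_integral_sq_le {f : Ω → ℝ} (hf : MemLp f 2 μ) {V : ℝ}
    (h : ∫ ω, f ω ^ 2 ∂μ ≤ V) : eLpNorm f 2 μ ≤ ENNReal.ofReal √V := by
  rw [hf.eLpNorm_eq_integral_rpow_norm two_ne_zero ENNReal.ofNat_ne_top]
  refine ENNReal.ofReal_le_ofReal ?_
  rw [Real.sqrt_eq_rpow]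
  simp only [ENNReal.toReal_ofNat, Real.rpow_two, Real.norm_eq_abs, sq_abs, one_div]
  exact Real.rpow_le_rpow (integral_nonneg fun ω => sq_nonneg _) h (by norm_num)

lemma charFun_map_real {Y : Ω → ℝ} (hY : AEMeasurable Y μ) (t : ℝ) :
    charFun (μ.map Y) t = ∫ ω, Complex.exp (t * Y ω * Complex.I) ∂μ := by
  rw [charFun_apply_real, integral_map hY (by fun_prop)]

lemma tendsto_charFun_map_of_ae_tendsto [IsFiniteMeasure μ] {X : ℕ → Ω → ℝ} {S : Ω → ℝ}
    (hX : ∀ n, AEMeasurable (X n) μ) (hS : AEMeasurable S μ)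
    (hlim : ∀ᵐ ω ∂μ, Tendsto (fun n => X n ω) atTop (𝓝 (S ω))) (t : ℝ) :
    Tendsto (fun n => charFun (μ.map (X n)) t) atTop (𝓝 (charFun (μ.map S) t)) := by
  simp_rw [charFun_map_real (hX _), charFun_map_real hS]
  refine tendsto_integral_of_dominated_convergence (fun _ => 1)
    (fun n => by fun_prop) (integrable_const 1) (fun n => ae_of_all _ fun ω => ?_) ?_
  · rw [← Complex.ofReal_mul, Complex.norm_exp_ofReal_mul_I]
  · filter_upwards [hlim] with ω hω
    exact ((Complex.continuous_exp.comp (continuous_const.mul Complex.continuous_ofReal |>.mul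
      continuous_const)).tendsto _).comp hω

lemma not_forall_tendsto_charFun_map_zero [IsProbabilityMeasure μ] {X : ℕ → Ω → ℝ}
    (hX : ∀ n, AEMeasurable (X n) μ)
    (hconv : ∀ᵐ ω ∂μ, ∃ L, Tendsto (fun n => X n ω) atTop (𝓝 L)) :
    ¬ ∀ t ≠ 0, Tendsto (fun n => charFun (μ.map (X n)) t) atTop (𝓝 0) := by
  intro hzero
  have hS : ∀ᵐ ω ∂μ, Tendsto (fun n => X n ω) atTop (𝓝 (limUnder atTop fun n => X n ω)) :=
    hconv.mono fun ω => tendsto_nhds_limUnder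
  have hSm := aemeasurable_of_tendsto_metrizable_ae' hX hS
  have := Measure.isProbabilityMeasure_map (μ := μ) hSm
  have hφ : charFun (μ.map fun ω => limUnder atTop fun n => X n ω) = 0 :=
    continuous_charFun.ext_on (dense_compl_singleton 0) continuous_const fun t ht =>
      tendsto_nhds_unique (tendsto_charFun_map_of_ae_tendsto hX hSm hS t) (hzero t ht)
  simpa using congrFun hφ 0

end

namespace ProbabilityTheory

variable {Ω : Type*} [MeasurableSpace Ω] {μ : Measure Ω} [IsProbabilityMeasure μ]

lemma iIndepFun.integral_sum_sq {ι : Type*} {X : ι → Ω → ℝ} (hind : iIndepFun X μ)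
    (hX : ∀ i, MemLp (X i) 2 μ) (hmean : ∀ i, μ[X i] = 0) (s : Finset ι) :
    ∫ ω, (∑ i ∈ s, X i ω) ^ 2 ∂μ = ∑ i ∈ s, ∫ ω, X i ω ^ 2 ∂μ := by
  have hvar := IndepFun.variance_sum (s := s) (fun i _ => hX i)
    (fun i _ j _ hij => hind.indepFun hij)
  have hsum_mean : μ[∑ i ∈ s, X i] = 0 := by
    simp only [Finset.sum_apply]
    rw [integral_finsetSum _ fun i _ => (hX i).integrable one_le_two]
    exact Finset.sum_eq_zero fun i _ => hmean i
  rw [variance_of_integral_eq_zero (s.aemeasurable_sum fun i _ => (hX i).aemeasurable)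
    hsum_mean] at hvar
  simp only [Finset.sum_apply] at hvar
  rw [hvar]
  exact Finset.sum_congr rfl fun i _ => variance_of_integral_eq_zero (hX i).aemeasurable (hmean i)

lemma iIndepFun.martingale_sum_range_succ {X : ℕ → Ω → ℝ} (hX : ∀ n, StronglyMeasurable (X n))
    (hind : iIndepFun X μ) (hint : ∀ n, Integrable (X n) μ) (hmean : ∀ n, μ[X n] = 0) :
    Martingale (fun n => ∑ i ∈ Finset.range (n + 1), X i) (Filtration.natural X hX) μ := by
  have hadapted : StronglyAdapted (Filtration.natural X hX)
      (fun n => ∑ i ∈ Finset.range (n + 1), X i) := fun n =>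
    Finset.stronglyMeasurable_sum _ fun i hi =>
      (Filtration.stronglyAdapted_natural hX i).mono
        ((Filtration.natural X hX).mono (Nat.lt_succ_iff.mp (Finset.mem_range.mp hi)))
  have hsum_int (n : ℕ) : Integrable (∑ i ∈ Finset.range (n + 1), X i) μ :=
    integrable_finsetSum' _ fun i _ => hint i
  refine martingale_nat hadapted hsum_int fun n => ?_
  rw [Finset.sum_range_succ _ (n + 1)]
  filter_upwards [condExp_add (hsum_int n) (hint (n + 1)) (Filtration.natural X hX n),
    hind.condExp_natural_ae_eq_of_lt hX n.lt_succ_self] with ω hadd hnext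
  rw [hadd, Pi.add_apply, hnext, hmean, condExp_of_stronglyMeasurable
    ((Filtration.natural X hX).le n) (hadapted n) (hsum_int n), add_zero]

theorem iIndepFun.ae_exists_tendsto_sum {X : ℕ → Ω → ℝ} (hX : ∀ n, StronglyMeasurable (X n))
    (hind : iIndepFun X μ) (hL2 : ∀ n, MemLp (X n) 2 μ) (hmean : ∀ n, μ[X n] = 0)
    (hsum : Summable fun n => ∫ ω, X n ω ^ 2 ∂μ) :
    ∀ᵐ ω ∂μ, ∃ L, Tendsto (fun N => ∑ n ∈ Finset.range N, X n ω) atTop (𝓝 L) := by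
  have hbdd (n : ℕ) : eLpNorm (∑ i ∈ Finset.range (n + 1), X i) 1 μ ≤
      Real.toNNReal √(∑' n, ∫ ω, X n ω ^ 2 ∂μ) := by
    have hL2sum := memLp_finsetSum' (Finset.range (n + 1)) fun i _ => hL2 i
    refine (eLpNorm_le_eLpNorm_of_exponent_le one_le_two hL2sum.aestronglyMeasurable).trans ?_
    refine eLpNorm_two_le_sqrt_of_integral_sq_le hL2sum ?_
    simp only [Finset.sum_apply]
    rw [hind.integral_sum_sq hL2 hmean]
    exact hsum.sum_le_tsum _ fun n _ => integral_nonneg fun ω => sq_nonneg _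
  have hmart := hind.martingale_sum_range_succ hX (fun n => (hL2 n).integrable one_le_two) hmean
  filter_upwards [hmart.submartingale.exists_ae_tendsto_of_bdd hbdd] with ω ⟨L, hL⟩
  refine ⟨L, (tendsto_add_atTop_iff_nat 1).1 ?_⟩
  simpa only [Finset.sum_apply] using hL

end ProbabilityTheory

/-- `μ` is the symmetric `α`-stable law whose scale parameter is `c ^ (1 / α)`. -/
def IsSymmStable (μ : Measure ℝ) (α c : ℝ) : Prop :=
  ∀ t : ℝ, charFun μ t = Complex.exp (-(c * |t| ^ α) : ℝ)

namespace IsSymmStable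

variable {μ : Measure ℝ} {α c : ℝ}

lemma one_sub_charFun_re_le (h : IsSymmStable μ α c) (t : ℝ) :
    1 - (charFun μ t).re ≤ c * |t| ^ α := by
  rw [h, Complex.exp_ofReal_re]
  linarith [Real.one_sub_le_exp_neg (c * |t| ^ α)]

lemma integral_sin_eq_zero [IsFiniteMeasure μ] (h : IsSymmStable μ α c) :
    ∫ x, Real.sin x ∂μ = 0 := by
  have him := charFun_im (μ := μ) 1
  rw [h 1, Complex.exp_ofReal_im] at him
  simpa using him.symm

lemma integral_sin_sq_le [IsProbabilityMeasure μ] (h : IsSymmStable μ α c) (hα2 : α ≤ 2)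
    (hc : 0 ≤ c) :
    ∫ x, Real.sin x ^ 2 ∂μ ≤ 2 * c := by
  have h2α : |(2 : ℝ)| ^ α ≤ 4 := by
    rw [abs_two]
    calc (2 : ℝ) ^ α ≤ 2 ^ (2 : ℝ) := Real.rpow_le_rpow_of_exponent_le one_le_two hα2
      _ = 4 := by norm_num
  have := (h.one_sub_charFun_re_le 2).trans (mul_le_mul_of_nonneg_left h2α hc)
  rw [integral_sin_sq_eq_charFun_re]
  linarith

lemma integral_one_sub_sinc_le [IsProbabilityMeasure μ] (h : IsSymmStable μ α c) (hα : 0 ≤ α)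
    (hc : 0 ≤ c) :
    ∫ x, (1 - Real.sinc x) ∂μ ≤ c :=
  integral_one_sub_sinc_le_of_forall fun t ht => (h.one_sub_charFun_re_le t).trans <|
    mul_le_of_le_one_right hc (Real.rpow_le_one (abs_nonneg t) (abs_le.2 ht) hα)

end IsSymmStable

section StableSeries

variable {Ω : Type*} [MeasurableSpace Ω] {P : Measure Ω} [IsProbabilityMeasure P] {α : ℝ}
  {c : ℕ → ℝ} {Y : ℕ → Ω → ℝ}

lemma summable_of_ae_exists_tendsto_sum_stable (hc : ∀ n, 0 ≤ c n)
    (hY : ∀ n, Measurable (Y n)) (hind : iIndepFun Y P)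
    (hstable : ∀ n, IsSymmStable (P.map (Y n)) α (c n))
    (hconv : ∀ᵐ ω ∂P, ∃ L, Tendsto (fun N => ∑ n ∈ Finset.range N, Y n ω) atTop (𝓝 L)) :
    Summable c := by
  by_contra hdiv
  have hC := (not_summable_iff_tendsto_nat_atTop_of_nonneg hc).1 hdiv
  refine not_forall_tendsto_charFun_map_zero
    (fun N => (Finset.measurable_fun_sum _ fun n _ => hY n).aemeasurable) hconv fun t ht => ?_
  have hsum (N : ℕ) : charFun (P.map fun ω => ∑ n ∈ Finset.range N, Y n ω) t =
      Complex.exp (-((∑ n ∈ Finset.range N, c n) * |t| ^ α) : ℝ) := by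
    rw [(hind.restrict _).charFun_map_fun_finsetSum_eq_prod fun n _ => (hY n).aemeasurable]
    simp_rw [Finset.prod_apply, fun n => hstable n t, ← Complex.exp_sum]
    push_cast
    rw [Finset.sum_mul, ← Finset.sum_neg_distrib]
  simp_rw [hsum]
  have hdecay : Tendsto (fun N => Real.exp (-((∑ n ∈ Finset.range N, c n) * |t| ^ α)))
      atTop (𝓝 0) :=
    Real.tendsto_exp_neg_atTop_nhds_zero.comp
      (hC.atTop_mul_const (Real.rpow_pos_of_pos (abs_pos.2 ht) α))
  simpa [Function.comp_def] using (Complex.continuous_ofReal.tendsto 0).comp hdecay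

lemma ae_exists_tendsto_sum_stable_of_summable (hα : 0 ≤ α) (hα2 : α ≤ 2) (hc : ∀ n, 0 ≤ c n)
    (hY : ∀ n, Measurable (Y n)) (hind : iIndepFun Y P)
    (hstable : ∀ n, IsSymmStable (P.map (Y n)) α (c n)) (hsum : Summable c) :
    ∀ᵐ ω ∂P, ∃ L, Tendsto (fun N => ∑ n ∈ Finset.range N, Y n ω) atTop (𝓝 L) := by
  have := fun n => Measure.isProbabilityMeasure_map (μ := P) (hY n).aemeasurable
  have hmap (n : ℕ) (f : ℝ → ℝ) (hf : Continuous f) :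
      ∫ ω, f (Y n ω) ∂P = ∫ x, f x ∂(P.map (Y n)) :=
    (integral_map (hY n).aemeasurable hf.aestronglyMeasurable).symm
  have hsinc : ∀ᵐ ω ∂P, Summable fun n => 1 - Real.sinc (Y n ω) := by
    refine ae_summable_of_summable_integral
      (fun n => (integrable_const 1).sub (Real.integrable_sinc.comp_measurable (hY n)))
      (fun n ω => sub_nonneg.2 (Real.sinc_le_one _)) (hsum.of_nonneg_of_le
        (fun n => integral_nonneg fun ω => sub_nonneg.2 (Real.sinc_le_one _)) fun n => ?_)
    rw [hmap n (fun x => 1 - Real.sinc x) (continuous_const.sub Real.continuous_sinc)]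
    exact (hstable n).integral_one_sub_sinc_le hα (hc n)
  have hsin : ∀ᵐ ω ∂P, ∃ L,
      Tendsto (fun N => ∑ n ∈ Finset.range N, Real.sin (Y n ω)) atTop (𝓝 L) := by
    refine iIndepFun.ae_exists_tendsto_sum (X := fun n ω => Real.sin (Y n ω))
      (fun n => (Real.measurable_sin.comp (hY n)).stronglyMeasurable)
      (hind.comp (fun _ => Real.sin) fun _ => Real.measurable_sin)
      (fun n => MemLp.of_bound (Real.measurable_sin.comp (hY n)).aestronglyMeasurable 1
        (ae_of_all _ fun ω => Real.abs_sin_le_one _))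
      (fun n => ?_) ((hsum.mul_left 2).of_nonneg_of_le
        (fun n => integral_nonneg fun ω => sq_nonneg _) fun n => ?_)
    · rw [hmap n _ Real.continuous_sin]
      exact (hstable n).integral_sin_eq_zero
    · rw [hmap n (fun x => Real.sin x ^ 2) (Real.continuous_sin.pow 2)]
      exact (hstable n).integral_sin_sq_le hα2 (hc n)
  filter_upwards [hsinc, hsin] with ω hsinc hsin
  exact exists_tendsto_sum_of_sin hsin hsinc

end StableSeries

theorem stmt_1 {Ω : Type*} [MeasurableSpace Ω] (P : Measure Ω) [IsProbabilityMeasure P]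
    (α : ℝ) (hα : 0 < α) (hα2 : α ≤ 2)
    (c : ℕ → ℝ) (hc : ∀ n, 0 ≤ c n)
    (Y : ℕ → Ω → ℝ) (hYmeas : ∀ n, Measurable (Y n))
    (hindep : iIndepFun Y P)
    (hchar : ∀ n, ∀ θ : ℝ,
      ∫ ω, Complex.exp (θ * Y n ω * Complex.I) ∂P =
        Complex.exp (-(c n * |θ| ^ α) : ℝ)) :
    (∀ᵐ ω ∂P, ∃ L : ℝ,
        Tendsto (fun N => ∑ n ∈ Finset.range N, Y n ω) atTop (𝓝 L)) ↔
      Summable c := by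
  have hstable (n : ℕ) : IsSymmStable (P.map (Y n)) α (c n) := fun t => by
    rw [charFun_map_real (hYmeas n).aemeasurable, hchar]
  exact ⟨summable_of_ae_exists_tendsto_sum_stable hc hYmeas hindep hstable,
    ae_exists_tendsto_sum_stable_of_summable hα.le hα2 hc hYmeas hindep hstable⟩
end

section
/- Let α ∈ (0,2) and let σ : ℕ → [0,∞) be a sequence of nonnegative reals. Then the following are equivalent: (i) for every real sequence (a_n) with Σ_{n} a_n² < ∞ one has Σ_n (|a_n| σ_n)^α < ∞; (ii) Σ_n σ_n^{2α/(2−α)} < ∞. -/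
/-!
Young's inequality with exponents `2 / α` and `2 / (2 - α)` gives (ii) ⇒ (i).

For the converse put `β = 2α / (2 - α)`, `γ = α / 2` and suppose `b = σ ^ β` is not summable.
A gliding hump cuts `ℕ` into consecutive blocks on which `b` has mass `T k ≥ (2 ^ k) ^ (γ / (1 - γ))`
and puts the constant weight `w = 2⁻ᵏ / T k` on the `k`-th block. Then `∑ w b = ∑ 2⁻ᵏ < ∞`,
while each block contributes `2^(-kγ) T k ^ (1 - γ) ≥ 1` to `∑ w ^ γ b`.
The square-summable sequence `a = √(w b)` then has `∑ (|a| σ) ^ α = ∑ w ^ γ b = ∞`,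
because `β γ + α = β`.
-/

open Real Finset Filter

def blockIndex (N : ℕ → ℕ) (n : ℕ) : ℕ := Nat.findGreatest (fun k => N k ≤ n) n

theorem blockIndex_eq {N : ℕ → ℕ} (hN : StrictMono N) {k n : ℕ}
    (hk : N k ≤ n) (hn : n < N (k + 1)) : blockIndex N n = k := by
  refine Nat.findGreatest_eq_iff.2 ⟨(hN.id_le k).trans hk, fun _ => hk, fun m hkm _ hm => ?_⟩
  exact (hn.trans_le (hN.monotone hkm)).not_ge hm

theorem sum_range_eq_sum_sum_Ico {M : Type*} [AddCommMonoid M] (f : ℕ → M) {N : ℕ → ℕ}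
    (hN : Monotone N) (h0 : N 0 = 0) (K : ℕ) :
    ∑ i ∈ range (N K), f i = ∑ k ∈ range K, ∑ i ∈ Ico (N k) (N (k + 1)), f i := by
  induction K with
  | zero => simp [h0]
  | succ K ih =>
    rw [sum_range_succ, ← ih, sum_range_add_sum_Ico f (hN K.le_succ)]

theorem summable_sum_Ico_iff_of_nonneg {f : ℕ → ℝ} (hf : ∀ n, 0 ≤ f n) {N : ℕ → ℕ}
    (hN : StrictMono N) (h0 : N 0 = 0) :
    Summable (fun k => ∑ i ∈ Ico (N k) (N (k + 1)), f i) ↔ Summable f := by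
  have hpartial : Monotone fun n => ∑ i ∈ range n, f i :=
    fun m n hmn => sum_le_sum_of_subset_of_nonneg (range_subset_range.2 hmn) fun i _ _ => hf i
  rw [summable_iff_not_tendsto_nat_atTop_of_nonneg (fun k => sum_nonneg fun i _ => hf i),
    summable_iff_not_tendsto_nat_atTop_of_nonneg hf, not_iff_not]
  simp_rw [← sum_range_eq_sum_sum_Ico f hN.monotone h0]
  refine ⟨fun h => tendsto_atTop_atTop_of_monotone hpartial fun C => ?_,
    fun h => h.comp hN.tendsto_atTop⟩
  obtain ⟨K, hK⟩ := h.eventually_ge_atTop C |>.exists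
  exact ⟨N K, hK⟩

theorem exists_strictMono_le_sum_Ico {b : ℕ → ℝ} (hb : ∀ n, 0 ≤ b n) (h : ¬ Summable b)
    (t : ℕ → ℝ) :
    ∃ N : ℕ → ℕ, StrictMono N ∧ N 0 = 0 ∧ ∀ k, t k ≤ ∑ i ∈ Ico (N k) (N (k + 1)), b i := by
  have hstep : ∀ m C, ∃ n, m < n ∧ C ≤ ∑ i ∈ Ico m n, b i := by
    intro m C
    obtain ⟨n, hn, hmn⟩ := ((not_summable_iff_tendsto_nat_atTop_of_nonneg hb).1 h
      |>.eventually_ge_atTop (C + ∑ i ∈ range m, b i) |>.and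
      (eventually_gt_atTop m)).exists
    refine ⟨n, hmn, ?_⟩
    rw [← sum_range_add_sum_Ico b hmn.le] at hn
    linarith
  choose g hg_gt hg_le using hstep
  let N : ℕ → ℕ := fun k => Nat.rec 0 (fun k Nk => g Nk (t k)) k
  exact ⟨N, strictMono_nat_of_lt_succ fun k => hg_gt _ _, rfl, fun k => hg_le _ _⟩

theorem exists_summable_mul_not_summable_rpow_mul {b : ℕ → ℝ} (hb : ∀ n, 0 ≤ b n)
    (h : ¬ Summable b) {γ : ℝ} (hγ : γ < 1) :
    ∃ w : ℕ → ℝ, (∀ n, 0 ≤ w n) ∧ Summable (fun n => w n * b n) ∧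
      ¬ Summable (fun n => w n ^ γ * b n) := by
  set c : ℕ → ℝ := fun k => (1 / 2) ^ k
  have hc : ∀ k, 0 < c k := fun k => by positivity
  obtain ⟨N, hN, h0, hT⟩ := exists_strictMono_le_sum_Ico hb h fun k => c k ^ (-γ / (1 - γ))
  set T : ℕ → ℝ := fun k => ∑ i ∈ Ico (N k) (N (k + 1)), b i
  have hTpos : ∀ k, 0 < T k := fun k => (rpow_pos_of_pos (hc k) _).trans_le (hT k)
  set w : ℕ → ℝ := fun n => c (blockIndex N n) / T (blockIndex N n)
  have hw : ∀ k, ∀ i ∈ Ico (N k) (N (k + 1)), w i = c k / T k := fun k i hi => by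
    rw [mem_Ico] at hi
    simp only [w, blockIndex_eq hN hi.1 hi.2]
  have hw_nonneg : ∀ n, 0 ≤ w n := fun n => div_nonneg (hc _).le (hTpos _).le
  refine ⟨w, hw_nonneg, ?_, ?_⟩
  · rw [← summable_sum_Ico_iff_of_nonneg (fun n => mul_nonneg (hw_nonneg n) (hb n)) hN h0]
    refine summable_geometric_two.congr fun k => ?_
    rw [sum_congr rfl fun i hi => by rw [hw k i hi], ← mul_sum, div_mul_cancel₀ _ (hTpos k).ne']
  · rw [← summable_sum_Ico_iff_of_nonneg
      (fun n => mul_nonneg (rpow_nonneg (hw_nonneg n) _) (hb n)) hN h0]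
    have hge : ∀ k, 1 ≤ ∑ i ∈ Ico (N k) (N (k + 1)), w i ^ γ * b i := fun k => by
      have hT' : c k ^ (-γ) ≤ T k ^ (1 - γ) := by
        calc c k ^ (-γ) = (c k ^ (-γ / (1 - γ))) ^ (1 - γ) := by
              rw [← rpow_mul (hc k).le]; congr 1; field_simp [(sub_pos.2 hγ).ne']
          _ ≤ T k ^ (1 - γ) := rpow_le_rpow (by positivity) (hT k) (by linarith)
      calc (1 : ℝ) = c k ^ γ * c k ^ (-γ) := by rw [← rpow_add (hc k), add_neg_cancel, rpow_zero]
        _ ≤ c k ^ γ * T k ^ (1 - γ) := by gcongr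
        _ = (c k / T k) ^ γ * T k := by
          rw [div_rpow (hc k).le (hTpos k).le, rpow_sub (hTpos k), rpow_one]; ring
        _ = _ := by rw [sum_congr rfl fun i hi => by rw [hw k i hi], ← mul_sum]
    intro hsum
    obtain ⟨k, hk⟩ := (hsum.tendsto_atTop_zero.eventually (gt_mem_nhds one_pos)).exists
    exact (hge k).not_gt hk

theorem mul_rpow_le_young {α x y : ℝ} (hα : 0 < α) (hα2 : α < 2) (hx : 0 ≤ x) (hy : 0 ≤ y) :
    (x * y) ^ α ≤ α / 2 * x ^ 2 + (1 - α / 2) * y ^ (2 * α / (2 - α)) := by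
  have hsq : (x ^ 2) ^ (α / 2) = x ^ α := by
    rw [← rpow_natCast, ← rpow_mul hx]; congr 1; push_cast; ring
  have hpow : (y ^ (2 * α / (2 - α))) ^ (1 - α / 2) = y ^ α := by
    rw [← rpow_mul hy]; congr 1; field_simp [(sub_pos.2 hα2).ne']
  calc (x * y) ^ α = (x ^ 2) ^ (α / 2) * (y ^ (2 * α / (2 - α))) ^ (1 - α / 2) := by
        rw [hsq, hpow, mul_rpow hx hy]
    _ ≤ _ := geom_mean_le_arith_mean2_weighted (by positivity) (by linarith) (by positivity)
        (by positivity) (by ring)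

theorem sqrt_mul_rpow_mul_rpow {α w s : ℝ} (hα : 0 < α) (hα2 : α < 2) (hw : 0 ≤ w) (hs : 0 ≤ s) :
    (√(w * s ^ (2 * α / (2 - α))) * s) ^ α = w ^ (α / 2) * s ^ (2 * α / (2 - α)) := by
  have hexp : 2 * α / (2 - α) * (α / 2) + α = 2 * α / (2 - α) := by
    field_simp [(sub_pos.2 hα2).ne']; ring
  rw [mul_rpow (sqrt_nonneg _) hs, ← rpow_div_two_eq_sqrt _ (by positivity),
    mul_rpow hw (by positivity), mul_assoc, ← rpow_mul hs,
    ← rpow_add' hs (by rw [hexp]; positivity), hexp]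

theorem stmt_8 (α : ℝ) (hα : 0 < α) (hα2 : α < 2)
    (σ : ℕ → ℝ) (hσ : ∀ n, 0 ≤ σ n) :
    (∀ a : ℕ → ℝ, Summable (fun n => a n ^ 2) →
        Summable (fun n => (|a n| * σ n) ^ α)) ↔
      Summable (fun n => σ n ^ (2 * α / (2 - α))) := by
  constructor
  · intro H
    by_contra hns
    obtain ⟨w, hw, hwσ, hwσ_rpow⟩ := exists_summable_mul_not_summable_rpow_mul
      (fun n => rpow_nonneg (hσ n) _) hns (by linarith : α / 2 < 1)
    have ha : Summable fun n => √(w n * σ n ^ (2 * α / (2 - α))) ^ 2 :=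
      hwσ.congr fun n => (sq_sqrt (mul_nonneg (hw n) (rpow_nonneg (hσ n) _))).symm
    refine hwσ_rpow ((H _ ha).congr fun n => ?_)
    rw [abs_of_nonneg (sqrt_nonneg _), sqrt_mul_rpow_mul_rpow hα hα2 (hw n) (hσ n)]
  · intro hσβ a ha
    refine Summable.of_nonneg_of_le (fun n => rpow_nonneg (mul_nonneg (abs_nonneg _) (hσ n)) _)
      (fun n => ?_)
      ((ha.mul_left (α / 2)).add (hσβ.mul_left (1 - α / 2)))
    simpa only [sq_abs] using mul_rpow_le_young hα hα2 (abs_nonneg (a n)) (hσ n)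
end
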